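/- arXiv:2307.06846 — 3 statements merged into one kernel-verified Lean document; each statement's English description precedes it below -/
import Mathlib

section
/- Let ρ be a Clo derivation obtained from an NW proof π of Φ. Let u and v be unfolding nodes of ρ such that v is a child of u in the unfolding tree T_ρ and v is an x-node, and let u' be a node between u and v in ρ labelled by a discharge rule clo_{y'} with principal formula νy.ψ. Then none of the assumptions discharged at u' lie in the subtree of ρ rooted at v. Symmetrically, if v is a y-node and u' is labelled by a discharge rule clo_{x'} with principal formula νx.φ, then none of the assumptions discharged at u' lie in the subtree of ρ rooted at v. -/
set_option linter.unusedVariables false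

/-! ## Formulas of the modal μ-calculus -/

inductive Formula : Type
  | prop  : ℕ → Formula
  | nprop : ℕ → Formula
  | var   : ℕ → Formula
  | or    : Formula → Formula → Formula
  | and   : Formula → Formula → Formula
  | dia   : Formula → Formula
  | box   : Formula → Formula
  | mu    : ℕ → Formula → Formula
  | nu    : ℕ → Formula → Formula
  deriving DecidableEq

namespace Formula

/-- Free (formal) variables of a formula. -/
def freeVars : Formula → Finset ℕ
  | prop _ => ∅
  | nprop _ => ∅
  | var x => {x}
  | or a b => a.freeVars ∪ b.freeVars
  | and a b => a.freeVars ∪ b.freeVars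
  | dia a => a.freeVars
  | box a => a.freeVars
  | mu x a => a.freeVars.erase x
  | nu x a => a.freeVars.erase x

/-- A formula is closed if every formal variable is bound. -/
def Closed (φ : Formula) : Prop := φ.freeVars = ∅

/-- Substitution `φ[ψ/x]` (of a closed formula `ψ`, so capture is no issue). -/
def subst : Formula → ℕ → Formula → Formula
  | prop p, _, _ => prop p
  | nprop p, _, _ => nprop p
  | var y, x, ψ => if y = x then ψ else var y
  | or a b, x, ψ => or (a.subst x ψ) (b.subst x ψ)
  | and a b, x, ψ => and (a.subst x ψ) (b.subst x ψ)
  | dia a, x, ψ => dia (a.subst x ψ)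
  | box a, x, ψ => box (a.subst x ψ)
  | mu y a, x, ψ => if y = x then mu y a else mu y (a.subst x ψ)
  | nu y a, x, ψ => if y = x then nu y a else nu y (a.subst x ψ)

/-- The unfolding `φ[μx.φ]` of `μx.φ`. -/
def unfoldMu (x : ℕ) (φ : Formula) : Formula := φ.subst x (mu x φ)

/-- The unfolding `φ[νx.φ]` of `νx.φ`. -/
def unfoldNu (x : ℕ) (φ : Formula) : Formula := φ.subst x (nu x φ)

/-- `η x. φ` where `η = ν` if `isNu` and `η = μ` otherwise. -/
def eta (isNu : Bool) (x : ℕ) (φ : Formula) : Formula := if isNu then nu x φ else mu x φ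

/-- The unfolding `φ[ηx.φ]` of `ηx.φ`. -/
def unfoldEta (isNu : Bool) (x : ℕ) (φ : Formula) : Formula :=
  if isNu then unfoldNu x φ else unfoldMu x φ

/-- The negation (dual) of a formula. -/
def neg : Formula → Formula
  | prop p => nprop p
  | nprop p => prop p
  | var x => var x
  | or a b => and a.neg b.neg
  | and a b => or a.neg b.neg
  | dia a => box a.neg
  | box a => dia a.neg
  | mu x a => nu x a.neg
  | nu x a => mu x a.neg

end Formula

/-! ## Kripke semantics -/

/-- A Kripke model (transition system with a valuation). -/
structure Kripke (W : Type) where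
  rel : W → W → Prop
  val : ℕ → W → Prop

/-- Semantics of a formula in a Kripke model, under an assignment `env` of state
sets to the formal variables; `μ` and `ν` are interpreted as the least and
greatest fixpoints (given here by their Knaster–Tarski descriptions). -/
def sem {W : Type} (M : Kripke W) : Formula → (ℕ → Set W) → Set W
  | .prop p, _ => {w | M.val p w}
  | .nprop p, _ => {w | ¬ M.val p w}
  | .var x, env => env x
  | .or a b, env => sem M a env ∪ sem M b env
  | .and a b, env => sem M a env ∩ sem M b env
  | .dia a, env => {w | ∃ v, M.rel w v ∧ v ∈ sem M a env}
  | .box a, env => {w | ∀ v, M.rel w v → v ∈ sem M a env}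
  | .mu x a, env => ⋂₀ {S : Set W | sem M a (Function.update env x S) ⊆ S}
  | .nu x a, env => ⋃₀ {S : Set W | S ⊆ sem M a (Function.update env x S)}

/-- A sequent: a finite set of formulas (intended: closed formulas),
read disjunctively. -/
abbrev Sequent := Finset Formula

/-- All formulas of the sequent are closed. -/
def ClosedSeq (Γ : Sequent) : Prop := ∀ φ ∈ Γ, φ.Closed

/-- A sequent is valid if its disjunction holds at every state of every Kripke model. -/
def ValidSeq (Γ : Sequent) : Prop :=
  ∀ (W : Type) (M : Kripke W) (env : ℕ → Set W) (w : W), ∃ φ ∈ Γ, w ∈ sem M φ env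

/-! ## Closure, subsumption, adisjunctivity -/

/-- The trace step relation `φ ⤳ ψ`. -/
inductive TStep : Formula → Formula → Prop
  | orL (a b : Formula) : TStep (.or a b) a
  | orR (a b : Formula) : TStep (.or a b) b
  | andL (a b : Formula) : TStep (.and a b) a
  | andR (a b : Formula) : TStep (.and a b) b
  | dia (a : Formula) : TStep (.dia a) a
  | box (a : Formula) : TStep (.box a) a
  | mu (x : ℕ) (a : Formula) : TStep (.mu x a) (Formula.unfoldMu x a)
  | nu (x : ℕ) (a : Formula) : TStep (.nu x a) (Formula.unfoldNu x a)

/-- The closure of a sequent: least superset closed under `⤳`. -/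
def Clos (Γ : Sequent) : Set Formula :=
  {ψ | ∃ φ ∈ Γ, Relation.ReflTransGen TStep φ ψ}

/-- The subsumption order on formal variables (relative to an ambient sequent):
`x ≤ y` iff `x = y` or `x` occurs free in the (ηy.ψ)-formula binding `y`. -/
def VarLe (Γ : Sequent) (x y : ℕ) : Prop :=
  x = y ∨ ∃ (b : Bool) (φ : Formula),
    Formula.eta b y φ ∈ Clos Γ ∧ x ∈ (Formula.eta b y φ).freeVars

/-- Adisjunctivity of a sequent. -/
def Adisjunctive (Γ : Sequent) : Prop :=
  ∀ (x : ℕ) (φ : Formula), Formula.nu x φ ∈ Clos Γ →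
    ∀ ψ₀ ψ₁ : Formula, Formula.or ψ₀ ψ₁ ∈ Clos {Formula.nu x φ} →
      Formula.nu x φ ∉ Clos {ψ₀} ∨ Formula.nu x φ ∉ Clos {ψ₁}

/-! ## The proof system NW -/

/-- An instance of an NW rule (recording context and principal formula). -/
inductive NWRule : Type
  | ax (p : ℕ)
  | orR (Γ : Sequent) (φ ψ : Formula)
  | andR (Γ : Sequent) (φ ψ : Formula)
  | weak (Γ : Sequent) (φ : Formula)
  | boxR (Γ : Sequent) (φ : Formula)
  | unfold (Γ : Sequent) (isNu : Bool) (x : ℕ) (φ : Formula)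

namespace NWRule

/-- Conclusion of a rule instance. -/
def concl : NWRule → Sequent
  | .ax p => {.prop p, .nprop p}
  | .orR Γ φ ψ => insert (.or φ ψ) Γ
  | .andR Γ φ ψ => insert (.and φ ψ) Γ
  | .weak Γ φ => insert φ Γ
  | .boxR Γ φ => insert (.box φ) (Γ.image Formula.dia)
  | .unfold Γ b x φ => insert (Formula.eta b x φ) Γ

/-- Premises of a rule instance. -/
def prems : NWRule → List Sequent
  | .ax _ => []
  | .orR Γ φ ψ => [insert φ (insert ψ Γ)]
  | .andR Γ φ ψ => [insert φ Γ, insert ψ Γ]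
  | .weak Γ _ => [Γ]
  | .boxR Γ φ => [insert φ Γ]
  | .unfold Γ b x φ => [insert (Formula.unfoldEta b x φ) Γ]

/-- The descendant relation of a rule instance: `descends r i a b` holds if the
formula `b` in the `i`-th premise is a descendant of the formula `a` in the
conclusion. -/
def descends : NWRule → ℕ → Formula → Formula → Prop
  | .ax _, _, _, _ => False
  | .orR Γ φ ψ, _, a, b => (a = .or φ ψ ∧ (b = φ ∨ b = ψ)) ∨ (a ∈ Γ ∧ b = a)
  | .andR Γ φ ψ, i, a, b => (a = .and φ ψ ∧ b = (if i = 0 then φ else ψ)) ∨ (a ∈ Γ ∧ b = a)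
  | .weak Γ _, _, a, b => a ∈ Γ ∧ b = a
  | .boxR Γ φ, _, a, b => (a = .box φ ∧ b = φ) ∨ (∃ c ∈ Γ, a = .dia c ∧ b = c)
  | .unfold Γ isNu x φ, _, a, b =>
      (a = Formula.eta isNu x φ ∧ b = Formula.unfoldEta isNu x φ) ∨ (a ∈ Γ ∧ b = a)

end NWRule

/-- An NW derivation of `Δ`: a (possibly infinite) tree of nodes (addressed by
lists of child indices) respecting the NW rules, all of whose leaves are axioms
(the only rules without premises are axioms). -/
structure NWDeriv (Δ : Sequent) where
  tree : Set (List ℕ)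
  root_mem : [] ∈ tree
  prefix_closed : ∀ u n, u ++ [n] ∈ tree → u ∈ tree
  rule : List ℕ → NWRule
  label : List ℕ → Sequent
  label_root : label [] = Δ
  label_concl : ∀ u ∈ tree, label u = (rule u).concl
  child_iff : ∀ u ∈ tree, ∀ n : ℕ, (u ++ [n] ∈ tree ↔ n < (rule u).prems.length)
  label_child : ∀ u ∈ tree, ∀ n : ℕ, ∀ h : n < (rule u).prems.length,
      label (u ++ [n]) = (rule u).prems.get ⟨n, h⟩

/-- The node at depth `n` on the branch described by the sequence `f` of child
indices. -/
def branchNode (f : ℕ → ℕ) (n : ℕ) : List ℕ := (List.range n).map f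

namespace NWDeriv

variable {Δ : Sequent}

/-- `f` describes an infinite branch of the derivation. -/
def IsBranch (π : NWDeriv Δ) (f : ℕ → ℕ) : Prop := ∀ n, branchNode f n ∈ π.tree

/-- `g` is a trace on the branch `f` starting at depth `k`. -/
def IsTraceOn (π : NWDeriv Δ) (f : ℕ → ℕ) (k : ℕ) (g : ℕ → Formula) : Prop :=
  ∀ n, g n ∈ π.label (branchNode f (k + n)) ∧
    (π.rule (branchNode f (k + n))).descends (f (k + n)) (g n) (g (n + 1))

end NWDeriv

/-- The set of formulas occurring infinitely often in the sequence `g`. -/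
def InfOcc (g : ℕ → Formula) : Set Formula := {φ | ∀ N, ∃ n ≥ N, g n = φ}

/-- `g` is a ν-trace: the subsumption-minimal fixpoint formula occurring
infinitely often on it (equivalently, the fixpoint formula occurring infinitely
often whose closure contains every formula occurring infinitely often) is a
ν-formula. -/
def IsNuTraceSeq (g : ℕ → Formula) : Prop :=
  ∃ (x : ℕ) (φ : Formula), Formula.nu x φ ∈ InfOcc g ∧
    ∀ ψ ∈ InfOcc g, ψ ∈ Clos {Formula.nu x φ}

/-- An NW derivation is a proof if every infinite branch carries a ν-trace. -/
def NWDeriv.IsProof {Δ : Sequent} (π : NWDeriv Δ) : Prop :=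
  ∀ f : ℕ → ℕ, π.IsBranch f → ∃ k g, π.IsTraceOn f k g ∧ IsNuTraceSeq g

/-- Finite traces inside a derivation: `TraceRT π u φ v ψ` says there is a trace
from the formula `φ` at node `u` to the formula `ψ` at node `v`. -/
inductive NWDeriv.TraceRT {Δ : Sequent} (π : NWDeriv Δ) :
    List ℕ → Formula → List ℕ → Formula → Prop
  | refl (u : List ℕ) (φ : Formula) : NWDeriv.TraceRT π u φ u φ
  | step {u : List ℕ} {φ : Formula} {v : List ℕ} {ψ : Formula} {n : ℕ} {χ : Formula} :
      NWDeriv.TraceRT π u φ v ψ → v ++ [n] ∈ π.tree →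
      (π.rule v).descends n ψ χ → NWDeriv.TraceRT π u φ (v ++ [n]) χ

/-! ## The concrete sequent Φ -/

/-- The propositional letter `p`. -/
def pP : Formula := .prop 0
/-- The negated letter `p̄`. -/
def pN : Formula := .nprop 0
/-- `νy.□(p ∧ (□x ∨ ◇y))`, with `x` (variable 0) free. -/
def psiIn : Formula := .nu 1 (.box (.and pP (.or (.box (.var 0)) (.dia (.var 1)))))
/-- `◇(p̄ ∧ (□x ∨ ◇νy.□(p ∧ (□x ∨ ◇y))))`, the body of `νx.φ`. -/
def phiBody : Formula := .dia (.and pN (.or (.box (.var 0)) (.dia psiIn)))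
/-- `νx.φ = νx.◇(p̄ ∧ (□x ∨ ◇νy.□(p ∧ (□x ∨ ◇y))))`. -/
def nuX : Formula := .nu 0 phiBody
/-- `νy.ψ = νy.□(p ∧ (□νx.φ ∨ ◇y))`. -/
def nuY : Formula := psiIn.subst 0 nuX
/-- `□(p ∧ (□νx.φ ∨ ◇y))`, the body of `νy.ψ`. -/
def psiBody : Formula := .box (.and pP (.or (.box nuX) (.dia (.var 1))))
/-- The sequent `Φ = {νx.φ, νy.ψ}`. -/
def PhiSeq : Sequent := {nuX, nuY}
/-- `χ = □νx.φ ∨ ◇νy.ψ`. -/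
def chi : Formula := .or (.box nuX) (.dia nuY)
/-- The unfolding `φ[νx.φ]`. -/
def unfX : Formula := Formula.unfoldNu 0 phiBody
/-- The unfolding `ψ[νy.ψ]`. -/
def unfY : Formula := Formula.unfoldNu 1 psiBody

/-! ## Unfolding trees for NW proofs of Φ -/

namespace NWDeriv

/-- An unfolding node: a node labelled by the sequent Φ. -/
def UnfNode (π : NWDeriv PhiSeq) (u : List ℕ) : Prop := u ∈ π.tree ∧ π.label u = PhiSeq

/-- `v` is a child of `u` in the unfolding tree `T_π`. -/
def TChild (π : NWDeriv PhiSeq) (u v : List ℕ) : Prop :=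
  π.UnfNode u ∧ π.UnfNode v ∧ u <+: v ∧ u ≠ v ∧
    ∀ w, u <+: w → w <+: v → w ≠ u → w ≠ v → ¬ π.UnfNode w

/-- `v` is an x-node (child of `u` in `T_π`): no trace from `νy.ψ` at `u` to
`νx.φ` or `νy.ψ` at `v`. -/
def IsXNode (π : NWDeriv PhiSeq) (u v : List ℕ) : Prop :=
  π.TChild u v ∧ ¬ (π.TraceRT u nuY v nuX ∨ π.TraceRT u nuY v nuY)

/-- `v` is a y-node (child of `u` in `T_π`): no trace from `νx.φ` at `u` to
`νx.φ` or `νy.ψ` at `v`. -/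
def IsYNode (π : NWDeriv PhiSeq) (u v : List ℕ) : Prop :=
  π.TChild u v ∧ ¬ (π.TraceRT u nuX v nuX ∨ π.TraceRT u nuX v nuY)

end NWDeriv

/-! ## The annotated proof system Clo (optionally with cut) -/

/-- Names: `(x, i)` is the `i`-th name for the formal variable `x`. -/
abbrev Name := ℕ × ℕ
/-- Annotations: finite words of names. -/
abbrev Ann := List Name
/-- Annotated formulas `φ^a`. -/
abbrev AFormula := Formula × Ann
/-- Annotated sequents. -/
abbrev ASequent := Finset AFormula

/-- Erase the annotations of an annotated sequent. -/
def stripSeq (Δ : ASequent) : Sequent := Δ.image Prod.fst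

/-- Equip each formula of a plain sequent with the empty annotation. -/
def annSeq (Γ : Sequent) : ASequent := Γ.image (fun φ => (φ, ([] : Ann)))

/-- `a ≤ x`: every name in the annotation `a` is a name of a variable `≤ x`
in the subsumption order (relative to the ambient sequent `Γ₀`). -/
def AnnLe (Γ₀ : Sequent) (a : Ann) (x : ℕ) : Prop := ∀ m ∈ a, VarLe Γ₀ m.1 x

/-- The name `x'` does not appear in the annotated sequent `Δ`. -/
def NameFresh (x' : Name) (Δ : ASequent) : Prop := ∀ φa ∈ Δ, x' ∉ φa.2

/-- An instance of a rule of Clo (with cut), including the bookkeeping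
constructor `asm` for discharged assumptions. -/
inductive CloRule : Type
  | ax (p : ℕ)
  | orR (Γ : ASequent) (φ ψ : Formula) (a : Ann)
  | andR (Γ : ASequent) (φ ψ : Formula) (a : Ann)
  | weak (Γ : ASequent) (φ : Formula) (a : Ann)
  | boxR (Γ : ASequent) (φ : Formula) (a : Ann)
  | unfold (Γ : ASequent) (isNu : Bool) (x : ℕ) (φ : Formula) (a : Ann)
  | exp (l : List (Formula × Ann × Ann))
  | clo (Γ : ASequent) (x : ℕ) (φ : Formula) (a : Ann) (x' : Name)
  | asm (Γ : ASequent) (x : ℕ) (φ : Formula) (a : Ann) (x' : Name)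
  | cut (Γ : ASequent) (A : Formula)

namespace CloRule

/-- Conclusion of a rule instance. -/
def concl : CloRule → ASequent
  | .ax p => {(.prop p, []), (.nprop p, [])}
  | .orR Γ φ ψ a => insert (.or φ ψ, a) Γ
  | .andR Γ φ ψ a => insert (.and φ ψ, a) Γ
  | .weak Γ φ a => insert (φ, a) Γ
  | .boxR Γ φ a => insert (.box φ, a) (Γ.image (fun q => (Formula.dia q.1, q.2)))
  | .unfold Γ b x φ a => insert (Formula.eta b x φ, a) Γ
  | .exp l => (l.map (fun t => (t.1, t.2.2))).toFinset
  | .clo Γ x φ a _ => insert (.nu x φ, a) Γ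
  | .asm Γ x φ a x' => insert (.nu x φ, a ++ [x']) Γ
  | .cut Γ _ => Γ

/-- Premises of a rule instance (a discharged assumption is a leaf). -/
def prems : CloRule → List ASequent
  | .ax _ => []
  | .orR Γ φ ψ a => [insert (φ, a) (insert (ψ, a) Γ)]
  | .andR Γ φ ψ a => [insert (φ, a) Γ, insert (ψ, a) Γ]
  | .weak Γ _ _ => [Γ]
  | .boxR Γ φ a => [insert (φ, a) Γ]
  | .unfold Γ b x φ a => [insert (Formula.unfoldEta b x φ, a) Γ]
  | .exp l => [(l.map (fun t => (t.1, t.2.1))).toFinset]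
  | .clo Γ x φ a x' => [insert (Formula.unfoldNu x φ, a ++ [x']) Γ]
  | .asm _ _ _ _ _ => []
  | .cut Γ A => [insert (A, []) Γ, insert (A.neg, []) Γ]

/-- Side conditions of the rules, relative to the ambient plain sequent `Γ₀`
(used for the subsumption order). -/
def Ok (Γ₀ : Sequent) : CloRule → Prop
  | .unfold _ _ x _ a => AnnLe Γ₀ a x
  | .exp l => ∀ t ∈ l, List.Sublist t.2.1 t.2.2
  | .clo Γ x _ a x' => x'.1 = x ∧ AnnLe Γ₀ a x ∧ NameFresh x' Γ
  | .asm _ x _ _ x' => x'.1 = x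
  | .cut _ A => A.Closed
  | _ => True

/-- Is this rule an instance of exp? -/
def IsExp : CloRule → Prop
  | .exp _ => True
  | _ => False

/-- Is this rule a discharged assumption? -/
def IsAsm : CloRule → Prop
  | .asm _ _ _ _ _ => True
  | _ => False

/-- Is this rule a cut? -/
def IsCut : CloRule → Prop
  | .cut _ _ => True
  | _ => False

/-- The discharge token of a clo rule. -/
def cloToken : CloRule → Option Name
  | .clo _ _ _ _ x' => some x'
  | _ => none

/-- The descendant relation of a rule instance, on plain formulas. -/
def descends : CloRule → ℕ → Formula → Formula → Prop
  | .ax _, _, _, _ => False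
  | .orR Γ φ ψ _, _, c, d => (c = .or φ ψ ∧ (d = φ ∨ d = ψ)) ∨ ((∃ e ∈ Γ, c = e.1) ∧ d = c)
  | .andR Γ φ ψ _, i, c, d =>
      (c = .and φ ψ ∧ d = (if i = 0 then φ else ψ)) ∨ ((∃ e ∈ Γ, c = e.1) ∧ d = c)
  | .weak Γ _ _, _, c, d => (∃ e ∈ Γ, c = e.1) ∧ d = c
  | .boxR Γ φ _, _, c, d => (c = .box φ ∧ d = φ) ∨ (∃ e ∈ Γ, c = .dia e.1 ∧ d = e.1)
  | .unfold Γ b x φ _, _, c, d =>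
      (c = Formula.eta b x φ ∧ d = Formula.unfoldEta b x φ) ∨ ((∃ e ∈ Γ, c = e.1) ∧ d = c)
  | .exp l, _, c, d => (∃ t ∈ l, c = t.1) ∧ d = c
  | .clo Γ x φ _ _, _, c, d =>
      (c = .nu x φ ∧ d = Formula.unfoldNu x φ) ∨ ((∃ e ∈ Γ, c = e.1) ∧ d = c)
  | .asm _ _ _ _ _, _, _, _ => False
  | .cut Γ _, _, c, d => (∃ e ∈ Γ, c = e.1) ∧ d = c

end CloRule

/-- A Clo derivation of the annotated sequent `Δ₀` (a possibly infinite tree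
respecting the rules of Clo, whose leaves are axioms or discharged
assumptions).  If `cut = false` the cut rule is not allowed. -/
structure CloDeriv (cut : Bool) (Δ₀ : ASequent) where
  tree : Set (List ℕ)
  root_mem : [] ∈ tree
  prefix_closed : ∀ u n, u ++ [n] ∈ tree → u ∈ tree
  rule : List ℕ → CloRule
  label : List ℕ → ASequent
  label_root : label [] = Δ₀
  label_concl : ∀ u ∈ tree, label u = (rule u).concl
  child_iff : ∀ u ∈ tree, ∀ n : ℕ, (u ++ [n] ∈ tree ↔ n < (rule u).prems.length)
  label_child : ∀ u ∈ tree, ∀ n : ℕ, ∀ h : n < (rule u).prems.length,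
      label (u ++ [n]) = (rule u).prems.get ⟨n, h⟩
  ok : ∀ u ∈ tree, (rule u).Ok (stripSeq Δ₀)
  cut_ok : ∀ u ∈ tree, (rule u).IsCut → cut = true
  token_unique : ∀ u ∈ tree, ∀ v ∈ tree, ∀ x' : Name,
      (rule u).cloToken = some x' → (rule v).cloToken = some x' → u = v
  discharged : ∀ u ∈ tree, ∀ (Γ : ASequent) (x : ℕ) (φ : Formula) (a : Ann) (x' : Name),
      rule u = .asm Γ x φ a x' →
      ∃ v, v <+: u ∧ v ≠ u ∧ v ∈ tree ∧ rule v = .clo Γ x φ a x'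

namespace CloDeriv

variable {c : Bool} {Δ₀ : ASequent}

/-- Finite traces (of plain formulas) inside a Clo derivation. -/
inductive TraceRT (ρ : CloDeriv c Δ₀) : List ℕ → Formula → List ℕ → Formula → Prop
  | refl (u : List ℕ) (φ : Formula) : TraceRT ρ u φ u φ
  | step {u : List ℕ} {φ : Formula} {v : List ℕ} {ψ : Formula} {n : ℕ} {χ : Formula} :
      TraceRT ρ u φ v ψ → v ++ [n] ∈ ρ.tree →
      (ρ.rule v).descends n ψ χ → TraceRT ρ u φ (v ++ [n]) χ

end CloDeriv

/-- A Clo derivation of the plain sequent `Φ` (all annotations at the root empty). -/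
abbrev CloDerivPhi := CloDeriv false (annSeq PhiSeq)

namespace CloDeriv

/-- Unfolding node of a Clo derivation of Φ: labelled by (an annotated version
of) the sequent Φ and not by the rule exp. -/
def UnfNode (ρ : CloDerivPhi) (u : List ℕ) : Prop :=
  u ∈ ρ.tree ∧ stripSeq (ρ.label u) = PhiSeq ∧ ¬ (ρ.rule u).IsExp

/-- `v` is a child of `u` in the unfolding tree `T_ρ`. -/
def TChild (ρ : CloDerivPhi) (u v : List ℕ) : Prop :=
  ρ.UnfNode u ∧ ρ.UnfNode v ∧ u <+: v ∧ u ≠ v ∧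
    ∀ w, u <+: w → w <+: v → w ≠ u → w ≠ v → ¬ ρ.UnfNode w

/-- `v` is an x-node (child of `u` in `T_ρ`). -/
def IsXNode (ρ : CloDerivPhi) (u v : List ℕ) : Prop :=
  ρ.TChild u v ∧ ¬ (ρ.TraceRT u nuY v nuX ∨ ρ.TraceRT u nuY v nuY)

/-- `v` is a y-node (child of `u` in `T_ρ`). -/
def IsYNode (ρ : CloDerivPhi) (u v : List ℕ) : Prop :=
  ρ.TChild u v ∧ ¬ (ρ.TraceRT u nuX v nuX ∨ ρ.TraceRT u nuX v nuY)

/-- A root-like unfolding node: no node in the subtree rooted at `u` is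
discharged by a clo rule applied at a proper ancestor of `u`. -/
def RootLike (ρ : CloDerivPhi) (u : List ℕ) : Prop :=
  ρ.UnfNode u ∧ ∀ w ∈ ρ.tree, u <+: w →
    ∀ (Γ : ASequent) (x : ℕ) (φ : Formula) (a : Ann) (x' : Name),
      ρ.rule w = .asm Γ x φ a x' →
      ∀ v ∈ ρ.tree, (ρ.rule v).cloToken = some x' → ¬ (v <+: u ∧ v ≠ u)

end CloDeriv

/-! ## Obtaining Clo derivations from NW proofs -/

/-- Erasing annotations from a Clo rule instance gives an NW rule instance
(clo becomes a ν-unfolding); exp and discharged assumptions are erased. -/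
def CloRule.strip : CloRule → Option NWRule
  | .ax p => some (.ax p)
  | .orR Γ φ ψ _ => some (.orR (stripSeq Γ) φ ψ)
  | .andR Γ φ ψ _ => some (.andR (stripSeq Γ) φ ψ)
  | .weak Γ φ _ => some (.weak (stripSeq Γ) φ)
  | .boxR Γ φ _ => some (.boxR (stripSeq Γ) φ)
  | .unfold Γ b x φ _ => some (.unfold (stripSeq Γ) b x φ)
  | .exp _ => none
  | .clo Γ x φ _ _ => some (.unfold (stripSeq Γ) true x φ)
  | .asm _ _ _ _ _ => none
  | .cut _ _ => none

/-- `ρ` is obtained from the NW proof `π` by changing some ν-unfoldings into clo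
rules with discharged assumptions (pruning the tree there) and adding
annotations and exp rules: witnessed by a structure-preserving map `e` from the
nodes of `ρ` to the nodes of `π` that collapses the inserted exp nodes, matches
the labels up to annotations, and matches the rules up to annotations (with clo
read as ν-unfolding). -/
def Obtains {Γ : Sequent} (π : NWDeriv Γ) (ρ : CloDeriv false (annSeq Γ)) : Prop :=
  ∃ e : List ℕ → List ℕ,
    e [] = [] ∧
    (∀ u ∈ ρ.tree, e u ∈ π.tree) ∧
    (∀ u ∈ ρ.tree, stripSeq (ρ.label u) = π.label (e u)) ∧
    (∀ u ∈ ρ.tree, (ρ.rule u).IsExp → e (u ++ [0]) = e u) ∧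
    (∀ u ∈ ρ.tree, ¬ (ρ.rule u).IsExp → ∀ n : ℕ, u ++ [n] ∈ ρ.tree →
        e (u ++ [n]) = e u ++ [n]) ∧
    (∀ u ∈ ρ.tree, ∀ r : NWRule, (ρ.rule u).strip = some r → π.rule (e u) = r)

/-! ## The infinite unfolding of a Clo proof -/

/-- `Resolves u w`: in the infinite unfolding with exp nodes removed, the node
`u` of the original Clo derivation is represented by the node `w`, obtained by
skipping exp rules and replacing discharged assumptions by their companions. -/
inductive CloDeriv.Resolves {c : Bool} {Δ₀ : ASequent} (ρ : CloDeriv c Δ₀) :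
    List ℕ → List ℕ → Prop
  | base {u : List ℕ} : u ∈ ρ.tree → ¬ (ρ.rule u).IsExp → ¬ (ρ.rule u).IsAsm →
      CloDeriv.Resolves ρ u u
  | exp {u w : List ℕ} : u ∈ ρ.tree → (ρ.rule u).IsExp →
      CloDeriv.Resolves ρ (u ++ [0]) w → CloDeriv.Resolves ρ u w
  | asm {u v w : List ℕ} {Γ : ASequent} {x : ℕ} {φ : Formula} {a : Ann} {x' : Name} :
      u ∈ ρ.tree → ρ.rule u = .asm Γ x φ a x' →
      v ∈ ρ.tree → (ρ.rule v).cloToken = some x' →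
      CloDeriv.Resolves ρ v w → CloDeriv.Resolves ρ u w

/-- `π` is the NW derivation obtained from the infinite unfolding of the Clo
derivation `ρ` by replacing clo rules by ν-unfoldings, removing exp nodes and
erasing all annotations: witnessed by a map `f` sending each node of `π` to the
node of `ρ` it comes from, commuting with the resolution of exp nodes and of
discharged assumptions by their companions. -/
def IsUnfoldedStrip {Γ : Sequent} (ρ : CloDeriv false (annSeq Γ)) (π : NWDeriv Γ) : Prop :=
  ∃ f : List ℕ → List ℕ,
    ρ.Resolves [] (f []) ∧
    (∀ u ∈ π.tree, f u ∈ ρ.tree) ∧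
    (∀ u ∈ π.tree, stripSeq (ρ.label (f u)) = π.label u) ∧
    (∀ u ∈ π.tree, (ρ.rule (f u)).strip = some (π.rule u)) ∧
    (∀ u ∈ π.tree, ∀ n : ℕ, u ++ [n] ∈ π.tree → ρ.Resolves (f u ++ [n]) (f (u ++ [n])))

/-! ### Auxiliary definitions and formula shape lemmas -/

def fA : Formula := .and pN chi
def fB : Formula := .and pP chi

lemma nuX_eq : nuX = .nu 0 phiBody := rfl
lemma nuY_eq : nuY = .nu 1 psiBody := rfl
lemma unfX_eq : unfX = .dia fA := rfl
lemma unfY_eq : unfY = .box fB := rfl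

/-- Phase 0 formulas. -/
def inP0 (φ : Formula) : Prop :=
  φ = nuX ∨ φ = .dia fA ∨ φ = nuY ∨ φ = .box fB

/-- Phase 1 formulas. -/
def inP1 (φ : Formula) : Prop :=
  φ = fA ∨ φ = fB ∨ φ = pP ∨ φ = pN ∨ φ = chi ∨ φ = .box nuX ∨ φ = .dia nuY

/-- Phase 2 formulas. -/
def inP2 (φ : Formula) : Prop := φ = nuX ∨ φ = .dia fA

lemma inP0_or {α β : Formula} (h : inP0 (.or α β)) : False := by
  rcases h with h|h|h|h <;> simp [nuX_eq, nuY_eq] at h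

lemma inP0_and {α β : Formula} (h : inP0 (.and α β)) : False := by
  rcases h with h|h|h|h <;> simp [nuX_eq, nuY_eq] at h

lemma inP0_box {φ : Formula} (h : inP0 (.box φ)) : φ = fB := by
  rcases h with h|h|h|h <;> simp_all [nuX_eq, nuY_eq]

lemma inP0_dia {φ : Formula} (h : inP0 (.dia φ)) : φ = fA := by
  rcases h with h|h|h|h <;> simp_all [nuX_eq, nuY_eq]

lemma inP0_nu {x : ℕ} {φ : Formula} (h : inP0 (.nu x φ)) :
    (x = 0 ∧ φ = phiBody) ∨ (x = 1 ∧ φ = psiBody) := by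
  rcases h with h|h|h|h <;> simp_all [nuX_eq, nuY_eq]

lemma inP0_mu {x : ℕ} {φ : Formula} (h : inP0 (.mu x φ)) : False := by
  rcases h with h|h|h|h <;> simp [nuX_eq, nuY_eq] at h

lemma inP0_eta {b : Bool} {x : ℕ} {φ : Formula} (h : inP0 (.eta b x φ)) :
    b = true ∧ ((x = 0 ∧ φ = phiBody) ∨ (x = 1 ∧ φ = psiBody)) := by
  cases b
  · exact absurd h (by intro h; exact inP0_mu (by simpa [Formula.eta] using h))
  · exact ⟨rfl, inP0_nu (by simpa [Formula.eta] using h)⟩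

lemma inP1_or {α β : Formula} (h : inP1 (.or α β)) : α = .box nuX ∧ β = .dia nuY := by
  rcases h with h|h|h|h|h|h|h <;> simp_all [fA, fB, pP, pN, chi]

lemma inP1_and {α β : Formula} (h : inP1 (.and α β)) :
    (α = pN ∧ β = chi) ∨ (α = pP ∧ β = chi) := by
  rcases h with h|h|h|h|h|h|h <;> simp_all [fA, fB, pP, pN, chi]

lemma inP1_box {φ : Formula} (h : inP1 (.box φ)) : φ = nuX := by
  rcases h with h|h|h|h|h|h|h <;> simp_all [fA, fB, pP, pN, chi]

lemma inP1_dia {φ : Formula} (h : inP1 (.dia φ)) : φ = nuY := by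
  rcases h with h|h|h|h|h|h|h <;> simp_all [fA, fB, pP, pN, chi]

lemma inP1_nu {x : ℕ} {φ : Formula} (h : inP1 (.nu x φ)) : False := by
  rcases h with h|h|h|h|h|h|h <;> simp_all [fA, fB, pP, pN, chi]

lemma inP1_mu {x : ℕ} {φ : Formula} (h : inP1 (.mu x φ)) : False := by
  rcases h with h|h|h|h|h|h|h <;> simp_all [fA, fB, pP, pN, chi]

lemma inP1_eta {b : Bool} {x : ℕ} {φ : Formula} (h : inP1 (.eta b x φ)) : False := by
  cases b
  · exact inP1_mu (by simpa [Formula.eta] using h)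
  · exact inP1_nu (by simpa [Formula.eta] using h)

lemma inP2_or {α β : Formula} (h : inP2 (.or α β)) : False := by
  rcases h with h|h <;> simp [nuX_eq] at h

lemma inP2_and {α β : Formula} (h : inP2 (.and α β)) : False := by
  rcases h with h|h <;> simp [nuX_eq] at h

lemma inP2_box {φ : Formula} (h : inP2 (.box φ)) : False := by
  rcases h with h|h <;> simp [nuX_eq] at h

lemma inP2_nu {x : ℕ} {φ : Formula} (h : inP2 (.nu x φ)) : x = 0 ∧ φ = phiBody := by
  rcases h with h|h <;> simp_all [nuX_eq]

lemma inP2_mu {x : ℕ} {φ : Formula} (h : inP2 (.mu x φ)) : False := by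
  rcases h with h|h <;> simp [nuX_eq] at h

lemma inP2_eta {b : Bool} {x : ℕ} {φ : Formula} (h : inP2 (.eta b x φ)) :
    b = true ∧ x = 0 ∧ φ = phiBody := by
  cases b
  · exact absurd h (fun h => inP2_mu (by simpa [Formula.eta] using h))
  · exact ⟨rfl, inP2_nu (by simpa [Formula.eta] using h)⟩

lemma inP2_inP0 {φ : Formula} (h : inP2 φ) : inP0 φ := by
  rcases h with h|h
  · exact Or.inl h
  · exact Or.inr (Or.inl h)

-- simple distinctness facts used later
lemma nuX_ne_diaA : nuX ≠ Formula.dia fA := by decide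
lemma nuX_ne_boxB : nuX ≠ Formula.box fB := by decide
lemma nuY_ne_diaA : nuY ≠ Formula.dia fA := by decide
lemma nuY_ne_boxB : nuY ≠ Formula.box fB := by decide
lemma nuY_notP2 : ¬ inP2 nuY := by intro h; rcases h with h|h <;> revert h <;> decide
/-! ### Strip lemmas -/

lemma mem_stripSeq {Δ : ASequent} {φ : Formula} :
    φ ∈ stripSeq Δ ↔ ∃ b, (φ, b) ∈ Δ := by
  constructor
  · intro h
    obtain ⟨⟨ψ, b⟩, hm, rfl⟩ := Finset.mem_image.mp h
    exact ⟨b, hm⟩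
  · rintro ⟨b, hb⟩
    exact Finset.mem_image_of_mem _ hb

lemma stripPhi_cases {Δ : ASequent} (h : stripSeq Δ = PhiSeq) {φ : Formula} {b : Ann}
    (hm : (φ, b) ∈ Δ) : φ = nuX ∨ φ = nuY := by
  have : φ ∈ stripSeq Δ := Finset.mem_image_of_mem _ hm
  rw [h] at this
  simpa [PhiSeq] using this

lemma nuY_mem_of_strip {Δ : ASequent} (h : stripSeq Δ = PhiSeq) :
    ∃ b, (nuY, b) ∈ Δ := by
  have : nuY ∈ stripSeq Δ := by rw [h]; simp [PhiSeq]
  exact mem_stripSeq.mp this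

lemma exp_strip (l : List (Formula × Ann × Ann)) :
    stripSeq ((l.map (fun t => (t.1, t.2.1))).toFinset) =
      stripSeq ((l.map (fun t => (t.1, t.2.2))).toFinset) := by
  ext φ
  simp only [mem_stripSeq, List.mem_toFinset, List.mem_map]
  constructor
  · rintro ⟨b, t, ht, h⟩
    exact ⟨t.2.2, t, ht, by simp_all⟩
  · rintro ⟨b, t, ht, h⟩
    exact ⟨t.2.1, t, ht, by simp_all⟩

/-! ### Tree and trace lemmas -/

namespace CloDeriv

variable {c : Bool} {Δ₀ : ASequent} (ρ : CloDeriv c Δ₀)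

lemma mem_of_prefix {y z : List ℕ} (h : y <+: z) (hz : z ∈ ρ.tree) : y ∈ ρ.tree := by
  obtain ⟨s, rfl⟩ := h
  induction s using List.reverseRecOn with
  | nil => simpa using hz
  | append_singleton s n ih =>
    apply ih
    apply ρ.prefix_closed (y ++ s) n
    rwa [← List.append_assoc] at hz

lemma path_ind (P : List ℕ → Prop) {a b : List ℕ}
    (base : P a)
    (step : ∀ z n, a <+: z → z ++ [n] <+: b → P z → P (z ++ [n])) :
    ∀ z, a <+: z → z <+: b → P z := by
  suffices H : ∀ s : List ℕ, a ++ s <+: b → P (a ++ s) by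
    intro z haz hzb
    obtain ⟨s, rfl⟩ := haz
    exact H s hzb
  intro s
  induction s using List.reverseRecOn with
  | nil => intro _; simpa using base
  | append_singleton s n ih =>
    intro h
    rw [← List.append_assoc] at h ⊢
    exact step (a ++ s) n ⟨s, rfl⟩ h (ih ((List.prefix_append _ _).trans h))

lemma exists_succ {y z : List ℕ} (h : y <+: z) (hne : y ≠ z) : ∃ n, y ++ [n] <+: z := by
  obtain ⟨s, rfl⟩ := h
  cases s with
  | nil => simp at hne
  | cons n s => exact ⟨n, ⟨s, by simp⟩⟩

lemma path_ind_rev (P : List ℕ → Prop) {a b : List ℕ}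
    (base : P b)
    (step : ∀ z n, a <+: z → z ++ [n] <+: b → P (z ++ [n]) → P z) :
    ∀ z, a <+: z → z <+: b → P z := by
  suffices H : ∀ k, ∀ z, a <+: z → z <+: b → b.length - z.length ≤ k → P z by
    intro z h1 h2
    exact H b.length z h1 h2 (by omega)
  intro k
  induction k with
  | zero =>
    intro z h1 h2 hk
    have hlen : z.length = b.length := le_antisymm h2.length_le (by omega)
    have : z = b := List.IsPrefix.eq_of_length h2 hlen
    subst this; exact base
  | succ k ih =>
    intro z h1 h2 hk
    by_cases hzb : z = b
    · subst hzb; exact base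
    · obtain ⟨n, hn⟩ := exists_succ h2 hzb
      refine step z n h1 hn (ih (z ++ [n]) (h1.trans (List.prefix_append _ _)) hn ?_)
      have := hn.length_le
      simp at this ⊢
      omega

lemma trace_comp {a b d : List ℕ} {φ ψ χ : Formula} (h1 : ρ.TraceRT a φ b ψ)
    (h2 : ρ.TraceRT b ψ d χ) : ρ.TraceRT a φ d χ := by
  induction h2 with
  | refl => exact h1
  | step t hm hd ih => exact .step ih hm hd

lemma proper_prefix_length {y z : List ℕ} (h : y <+: z) (hne : y ≠ z) :
    y.length < z.length :=
  lt_of_le_of_ne h.length_le (fun hl => hne (h.eq_of_length hl))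

end CloDeriv
namespace CloDeriv

variable {Δ₀ : ASequent} (ρ : CloDeriv false Δ₀)

lemma label_child_eq {z : List ℕ} {n : ℕ} (hz : z ∈ ρ.tree) (hzn : z ++ [n] ∈ ρ.tree)
    {r : CloRule} (hr : ρ.rule z = r) :
    ∃ h : n < r.prems.length, ρ.label (z ++ [n]) = r.prems.get ⟨n, h⟩ := by
  subst hr
  exact ⟨(ρ.child_iff z hz n).mp hzn, ρ.label_child z hz n ((ρ.child_iff z hz n).mp hzn)⟩

lemma label_concl_eq {z : List ℕ} (hz : z ∈ ρ.tree) {r : CloRule} (hr : ρ.rule z = r) :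
    ρ.label z = r.concl := by
  subst hr; exact ρ.label_concl z hz

/-- Core backward step: an annotated formula in a premise whose annotation
contains the name `t` descends from an annotated formula in the conclusion
whose annotation contains `t`, provided the rule is not a `clo` with token `t`. -/
lemma core_step {z : List ℕ} {n : ℕ} {t : Name}
    (hz : z ∈ ρ.tree) (hzn : z ++ [n] ∈ ρ.tree)
    (htok : (ρ.rule z).cloToken ≠ some t)
    {χ : Formula} {b : Ann} (hm : (χ, b) ∈ ρ.label (z ++ [n])) (hy : t ∈ b) :
    ∃ χ₀ b₀, (χ₀, b₀) ∈ ρ.label z ∧ t ∈ b₀ ∧ (ρ.rule z).descends n χ₀ χ := by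
  cases hr : ρ.rule z with
  | ax p =>
    obtain ⟨hnlt, -⟩ := ρ.label_child_eq hz hzn hr
    simp [CloRule.prems] at hnlt
  | orR Γ φ ψ a₀ =>
    obtain ⟨hnlt, hlab⟩ := ρ.label_child_eq hz hzn hr
    have hconcl := ρ.label_concl_eq hz hr
    have hn0 : n = 0 := by simpa [CloRule.prems] using hnlt
    subst hn0
    simp only [CloRule.prems, List.get] at hlab
    rw [hlab] at hm
    rcases Finset.mem_insert.mp hm with h | h
    · obtain ⟨h1, h2⟩ := Prod.mk.injEq .. ▸ h
      exact ⟨.or φ ψ, a₀, by rw [hconcl]; exact Finset.mem_insert_self _ _, h2 ▸ hy,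
        Or.inl ⟨rfl, Or.inl h1⟩⟩
    · rcases Finset.mem_insert.mp h with h | h
      · obtain ⟨h1, h2⟩ := Prod.mk.injEq .. ▸ h
        exact ⟨.or φ ψ, a₀, by rw [hconcl]; exact Finset.mem_insert_self _ _, h2 ▸ hy,
          Or.inl ⟨rfl, Or.inr h1⟩⟩
      · exact ⟨χ, b, by rw [hconcl]; exact Finset.mem_insert_of_mem h, hy,
          Or.inr ⟨⟨(χ, b), h, rfl⟩, rfl⟩⟩
  | andR Γ φ ψ a₀ =>
    obtain ⟨hnlt, hlab⟩ := ρ.label_child_eq hz hzn hr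
    have hconcl := ρ.label_concl_eq hz hr
    have hn2 : n < 2 := by simpa [CloRule.prems] using hnlt
    interval_cases n <;>
    · simp only [CloRule.prems, List.get] at hlab
      rw [hlab] at hm
      rcases Finset.mem_insert.mp hm with h | h
      · obtain ⟨h1, h2⟩ := Prod.mk.injEq .. ▸ h
        exact ⟨.and φ ψ, a₀, by rw [hconcl]; exact Finset.mem_insert_self _ _, h2 ▸ hy,
          Or.inl ⟨rfl, by simpa using h1⟩⟩
      · exact ⟨χ, b, by rw [hconcl]; exact Finset.mem_insert_of_mem h, hy,
          Or.inr ⟨⟨(χ, b), h, rfl⟩, rfl⟩⟩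
  | weak Γ φ a₀ =>
    obtain ⟨hnlt, hlab⟩ := ρ.label_child_eq hz hzn hr
    have hconcl := ρ.label_concl_eq hz hr
    have hn0 : n = 0 := by simpa [CloRule.prems] using hnlt
    subst hn0
    simp only [CloRule.prems, List.get] at hlab
    rw [hlab] at hm
    exact ⟨χ, b, by rw [hconcl]; exact Finset.mem_insert_of_mem hm, hy,
      ⟨⟨(χ, b), hm, rfl⟩, rfl⟩⟩
  | boxR Γ φ a₀ =>
    obtain ⟨hnlt, hlab⟩ := ρ.label_child_eq hz hzn hr
    have hconcl := ρ.label_concl_eq hz hr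
    have hn0 : n = 0 := by simpa [CloRule.prems] using hnlt
    subst hn0
    simp only [CloRule.prems, List.get] at hlab
    rw [hlab] at hm
    rcases Finset.mem_insert.mp hm with h | h
    · obtain ⟨h1, h2⟩ := Prod.mk.injEq .. ▸ h
      exact ⟨.box φ, a₀, by rw [hconcl]; exact Finset.mem_insert_self _ _, h2 ▸ hy,
        Or.inl ⟨rfl, h1⟩⟩
    · refine ⟨.dia χ, b, ?_, hy, Or.inr ⟨(χ, b), h, rfl, rfl⟩⟩
      rw [hconcl]
      exact Finset.mem_insert_of_mem (Finset.mem_image_of_mem _ h)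
  | unfold Γ bb x φ a₀ =>
    obtain ⟨hnlt, hlab⟩ := ρ.label_child_eq hz hzn hr
    have hconcl := ρ.label_concl_eq hz hr
    have hn0 : n = 0 := by simpa [CloRule.prems] using hnlt
    subst hn0
    simp only [CloRule.prems, List.get] at hlab
    rw [hlab] at hm
    rcases Finset.mem_insert.mp hm with h | h
    · obtain ⟨h1, h2⟩ := Prod.mk.injEq .. ▸ h
      exact ⟨Formula.eta bb x φ, a₀, by rw [hconcl]; exact Finset.mem_insert_self _ _, h2 ▸ hy,
        Or.inl ⟨rfl, h1⟩⟩
    · exact ⟨χ, b, by rw [hconcl]; exact Finset.mem_insert_of_mem h, hy,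
        Or.inr ⟨⟨(χ, b), h, rfl⟩, rfl⟩⟩
  | exp l =>
    obtain ⟨hnlt, hlab⟩ := ρ.label_child_eq hz hzn hr
    have hconcl := ρ.label_concl_eq hz hr
    have hn0 : n = 0 := by simpa [CloRule.prems] using hnlt
    subst hn0
    simp only [CloRule.prems, List.get] at hlab
    rw [hlab] at hm
    obtain ⟨t', ht', heq⟩ := List.mem_map.mp (List.mem_toFinset.mp hm)
    have hok := ρ.ok z hz
    rw [hr] at hok
    have hsub : List.Sublist t'.2.1 t'.2.2 := hok t' ht'
    have hχ : t'.1 = χ := congrArg Prod.fst heq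
    have hb : t'.2.1 = b := congrArg Prod.snd heq
    refine ⟨χ, t'.2.2, ?_, hsub.mem (hb ▸ hy), ⟨⟨t', ht', hχ.symm⟩, rfl⟩⟩
    rw [hconcl]
    simp only [CloRule.concl]
    exact List.mem_toFinset.mpr (List.mem_map.mpr ⟨t', ht', by rw [hχ]⟩)
  | clo Γ x φ a₀ x'' =>
    obtain ⟨hnlt, hlab⟩ := ρ.label_child_eq hz hzn hr
    have hconcl := ρ.label_concl_eq hz hr
    rw [hr] at htok
    have hn0 : n = 0 := by simpa [CloRule.prems] using hnlt
    subst hn0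
    simp only [CloRule.prems, List.get] at hlab
    rw [hlab] at hm
    rcases Finset.mem_insert.mp hm with h | h
    · obtain ⟨h1, h2⟩ := Prod.mk.injEq .. ▸ h
      have htne : x'' ≠ t := by
        intro hxt; exact htok (by simp [CloRule.cloToken, hxt])
      have hta : t ∈ a₀ := by
        rcases List.mem_append.mp (h2 ▸ hy) with h | h
        · exact h
        · simp at h; exact absurd h.symm htne
      exact ⟨.nu x φ, a₀, by rw [hconcl]; exact Finset.mem_insert_self _ _, hta,
        Or.inl ⟨rfl, h1⟩⟩
    · exact ⟨χ, b, by rw [hconcl]; exact Finset.mem_insert_of_mem h, hy,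
        Or.inr ⟨⟨(χ, b), h, rfl⟩, rfl⟩⟩
  | asm Γ x φ a₀ x'' =>
    obtain ⟨hnlt, -⟩ := ρ.label_child_eq hz hzn hr
    simp [CloRule.prems] at hnlt
  | cut Γ A =>
    have := ρ.cut_ok z hz (by rw [hr]; trivial)
    simp at this

end CloDeriv
namespace CloDeriv

variable {Δ₀ : ASequent} (ρ : CloDeriv false Δ₀)

/-- L5: every formula above a `clo` node whose annotation contains the token of
that `clo` is connected to its principal formula by a trace. -/
lemma clo_trace {u' : List ℕ} {Γ' : ASequent} {x : ℕ} {φ : Formula} {a : Ann} {t : Name}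
    (hu' : u' ∈ ρ.tree) (hclo : ρ.rule u' = .clo Γ' x φ a t) :
    ∀ z ∈ ρ.tree, u' <+: z → ∀ χ b, (χ, b) ∈ ρ.label z → t ∈ b →
      ρ.TraceRT u' (.nu x φ) z χ := by
  have hfresh : NameFresh t Γ' := by
    have hok := ρ.ok u' hu'
    rw [hclo] at hok
    exact hok.2.2
  have hconcl := ρ.label_concl_eq hu' hclo
  intro z hz hpre
  refine CloDeriv.path_ind
    (fun y => y ∈ ρ.tree → ∀ χ b, (χ, b) ∈ ρ.label y → t ∈ b → ρ.TraceRT u' (.nu x φ) y χ)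
    ?base ?step z hpre (List.prefix_refl z) hz
  case base =>
    intro _ χ b hm hy
    rw [hconcl] at hm
    rcases Finset.mem_insert.mp hm with h | h
    · obtain ⟨h1, h2⟩ := Prod.mk.injEq .. ▸ h
      cases h1
      exact TraceRT.refl u' _
    · exact absurd hy (hfresh _ h)
  case step =>
    intro y n hy hynz ih hyn χ b hm hmy
    have hytree : y ∈ ρ.tree := ρ.mem_of_prefix (List.prefix_append _ _) hyn
    by_cases hc : (ρ.rule y).cloToken = some t
    · -- then `y = u'`
      have hyu : y = u' := ρ.token_unique y hytree u' hu' t hc (by rw [hclo]; rfl)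
      subst hyu
      obtain ⟨hnlt, hlab⟩ := ρ.label_child_eq hytree hyn hclo
      have hn0 : n = 0 := by simpa [CloRule.prems] using hnlt
      subst hn0
      simp only [CloRule.prems, List.get] at hlab
      rw [hlab] at hm
      rcases Finset.mem_insert.mp hm with h | h
      · obtain ⟨h1, h2⟩ := Prod.mk.injEq .. ▸ h
        refine TraceRT.step (TraceRT.refl y (.nu x φ)) hyn ?_
        rw [hclo]
        exact Or.inl ⟨rfl, h1⟩
      · exact absurd hmy (hfresh _ h)
    · obtain ⟨χ₀, b₀, hm₀, hy₀, hd⟩ := ρ.core_step hytree hyn hc hm hmy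
      exact TraceRT.step (ih hytree χ₀ b₀ hm₀ hy₀) hyn hd

/-- L6: going down from a discharged assumption, every node above `v` carries a
formula whose annotation contains the token. -/
lemma asm_ann {u' w : List ℕ} {Γ' : ASequent} {x : ℕ} {φ : Formula} {a : Ann} {t : Name}
    (hu' : u' ∈ ρ.tree) (hclo : ρ.rule u' = .clo Γ' x φ a t)
    (hw : w ∈ ρ.tree) (hasm : ρ.rule w = .asm Γ' x φ a t)
    {v : List ℕ} (hvw : v <+: w) (hlen : u'.length < v.length) :
    ∃ χ b, (χ, b) ∈ ρ.label v ∧ t ∈ b := by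
  refine CloDeriv.path_ind_rev (fun z => z ∈ ρ.tree → ∃ χ b, (χ, b) ∈ ρ.label z ∧ t ∈ b)
    ?base ?step v (List.prefix_refl v) hvw (ρ.mem_of_prefix hvw hw)
  case base =>
    intro _
    refine ⟨.nu x φ, a ++ [t], ?_, by simp⟩
    rw [ρ.label_concl_eq hw hasm]
    exact Finset.mem_insert_self _ _
  case step =>
    intro z n hvz hznw hP hz
    have hzn : z ++ [n] ∈ ρ.tree := ρ.mem_of_prefix hznw hw
    obtain ⟨χ, b, hm, hy⟩ := hP hzn
    have hc : (ρ.rule z).cloToken ≠ some t := by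
      intro hc
      have : z = u' := ρ.token_unique z hz u' hu' t hc (by rw [hclo]; rfl)
      subst this
      have := hvz.length_le
      omega
    obtain ⟨χ₀, b₀, hm₀, hy₀, -⟩ := ρ.core_step hz hzn hc hm hy
    exact ⟨χ₀, b₀, hm₀, hy₀⟩

end CloDeriv
namespace CloDeriv

variable {Δ₀ : ASequent} (ρ : CloDeriv false Δ₀)

/-- Phase 2 propagates upwards: once a label consists of `nuX`/`unfX` only,
all labels above it do as well. -/
lemma p2_prop {z₀ zb : List ℕ} (hzb : zb ∈ ρ.tree) (hpre : z₀ <+: zb)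
    (h2 : ∀ φa ∈ ρ.label z₀, inP2 φa.1) : ∀ φa ∈ ρ.label zb, inP2 φa.1 := by
  refine CloDeriv.path_ind (fun z => ∀ φa ∈ ρ.label z, inP2 φa.1) h2 ?_ zb hpre
    (List.prefix_refl zb)
  intro z n hz0z hznzb hP
  have hzn : z ++ [n] ∈ ρ.tree := ρ.mem_of_prefix hznzb hzb
  have hz : z ∈ ρ.tree := ρ.prefix_closed z n hzn
  cases hrule : ρ.rule z with
  | ax p =>
    obtain ⟨hnlt, -⟩ := ρ.label_child_eq hz hzn hrule
    simp [CloRule.prems] at hnlt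
  | asm Γ x φ a₀ x'' =>
    obtain ⟨hnlt, -⟩ := ρ.label_child_eq hz hzn hrule
    simp [CloRule.prems] at hnlt
  | cut Γ A =>
    have := ρ.cut_ok z hz (by rw [hrule]; trivial)
    simp at this
  | orR Γ φ ψ a₀ =>
    have hconcl := ρ.label_concl_eq hz hrule
    exact absurd (hP (.or φ ψ, a₀) (by rw [hconcl]; exact Finset.mem_insert_self _ _)) inP2_or
  | andR Γ φ ψ a₀ =>
    have hconcl := ρ.label_concl_eq hz hrule
    exact absurd (hP (.and φ ψ, a₀) (by rw [hconcl]; exact Finset.mem_insert_self _ _)) inP2_and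
  | boxR Γ φ a₀ =>
    have hconcl := ρ.label_concl_eq hz hrule
    exact absurd (hP (.box φ, a₀) (by rw [hconcl]; exact Finset.mem_insert_self _ _)) inP2_box
  | weak Γ φ a₀ =>
    obtain ⟨hnlt, hlab⟩ := ρ.label_child_eq hz hzn hrule
    have hconcl := ρ.label_concl_eq hz hrule
    have hn0 : n = 0 := by simpa [CloRule.prems] using hnlt
    subst hn0
    simp only [CloRule.prems, List.get] at hlab
    intro φa hm
    rw [hlab] at hm
    exact hP φa (by rw [hconcl]; exact Finset.mem_insert_of_mem hm)
  | unfold Γ bb x φ a₀ =>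
    obtain ⟨hnlt, hlab⟩ := ρ.label_child_eq hz hzn hrule
    have hconcl := ρ.label_concl_eq hz hrule
    obtain ⟨hb, hx, hφ⟩ := inP2_eta
      (hP (Formula.eta bb x φ, a₀) (by rw [hconcl]; exact Finset.mem_insert_self _ _))
    subst hb; subst hx; subst hφ
    have hn0 : n = 0 := by simpa [CloRule.prems] using hnlt
    subst hn0
    simp only [CloRule.prems, List.get] at hlab
    intro φa hm
    rw [hlab] at hm
    rcases Finset.mem_insert.mp hm with h | h
    · rw [h]; exact Or.inr rfl
    · exact hP φa (by rw [hconcl]; exact Finset.mem_insert_of_mem h)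
  | clo Γ x φ a₀ x'' =>
    obtain ⟨hnlt, hlab⟩ := ρ.label_child_eq hz hzn hrule
    have hconcl := ρ.label_concl_eq hz hrule
    obtain ⟨hx, hφ⟩ := inP2_nu
      (hP (.nu x φ, a₀) (by rw [hconcl]; exact Finset.mem_insert_self _ _))
    subst hx; subst hφ
    have hn0 : n = 0 := by simpa [CloRule.prems] using hnlt
    subst hn0
    simp only [CloRule.prems, List.get] at hlab
    intro φa hm
    rw [hlab] at hm
    rcases Finset.mem_insert.mp hm with h | h
    · rw [h]; exact Or.inr rfl
    · exact hP φa (by rw [hconcl]; exact Finset.mem_insert_of_mem h)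
  | exp l =>
    obtain ⟨hnlt, hlab⟩ := ρ.label_child_eq hz hzn hrule
    have hconcl := ρ.label_concl_eq hz hrule
    have hn0 : n = 0 := by simpa [CloRule.prems] using hnlt
    subst hn0
    simp only [CloRule.prems, List.get] at hlab
    intro φa hm
    rw [hlab] at hm
    obtain ⟨t', ht', heq⟩ := List.mem_map.mp (List.mem_toFinset.mp hm)
    have : (t'.1, t'.2.2) ∈ ρ.label z := by
      rw [hconcl]
      simp only [CloRule.concl]
      exact List.mem_toFinset.mpr (List.mem_map.mpr ⟨t', ht', rfl⟩)
    have h2 := hP _ this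
    have : φa.1 = t'.1 := by rw [← heq]
    rw [this]
    exact h2
end CloDeriv

namespace CloDeriv

/-- There is no node strictly between `u` and `v` in `T_ρ` whose stripped label
is `Φ`, above a non-`exp` node `u'` strictly between them. -/
lemma no_phi_between (ρ : CloDerivPhi) {u v u' : List ℕ} (hch : ρ.TChild u v)
    (huu' : u <+: u') (hu'v : u' <+: v) (hu'ne : u' ≠ v)
    (hu'noexp : ¬ (ρ.rule u').IsExp) :
    ∀ y, u <+: y → y <+: u' → y ≠ u → stripSeq (ρ.label y) ≠ PhiSeq := by
  intro y h1 h2 h3 hΦ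
  have hvtree : v ∈ ρ.tree := hch.2.1.1
  have hu'tree : u' ∈ ρ.tree := ρ.mem_of_prefix hu'v hvtree
  have hu'u : u' ≠ u := by
    rintro rfl
    exact h3 (h2.eq_of_length (le_antisymm h2.length_le h1.length_le))
  have hylen : u.length < y.length :=
    CloDeriv.proper_prefix_length h1 (fun h => h3 h.symm)
  have key : ∀ z, y <+: z → z <+: u' → stripSeq (ρ.label z) = PhiSeq := by
    refine CloDeriv.path_ind (fun z => stripSeq (ρ.label z) = PhiSeq) hΦ ?_
    intro z n hyz hznu'
    intro hzΦ
    have hzv : z <+: v := ((List.prefix_append _ _).trans hznu').trans hu'v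
    have hztree : z ∈ ρ.tree := ρ.mem_of_prefix hzv hvtree
    have hzntree : z ++ [n] ∈ ρ.tree := ρ.mem_of_prefix (hznu'.trans hu'v) hvtree
    have hzu : z ≠ u := by
      intro h
      have := hyz.length_le
      rw [h] at this
      omega
    have hzv' : z ≠ v := by
      intro h
      have h4 := (List.prefix_append z [n]).trans hznu' |>.length_le
      have h5 := hu'v.length_le
      have h6 := CloDeriv.proper_prefix_length hu'v hu'ne
      rw [h] at h4
      omega
    have hnotunf := hch.2.2.2.2 z (h1.trans hyz) hzv hzu hzv'
    have hexp : (ρ.rule z).IsExp := by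
      by_contra h
      exact hnotunf ⟨hztree, hzΦ, h⟩
    cases hrule : ρ.rule z with
    | exp l =>
      obtain ⟨hnlt, hlab⟩ := ρ.label_child_eq hztree hzntree hrule
      have hconcl := ρ.label_concl_eq hztree hrule
      have hn0 : n = 0 := by simpa [CloRule.prems] using hnlt
      subst hn0
      simp only [CloRule.prems, List.get] at hlab
      simp only [CloRule.concl] at hconcl
      rw [hlab, exp_strip l, ← hconcl]
      exact hzΦ
    | ax p => rw [hrule] at hexp; exact hexp.elim
    | orR Γ φ ψ a₀ => rw [hrule] at hexp; exact hexp.elim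
    | andR Γ φ ψ a₀ => rw [hrule] at hexp; exact hexp.elim
    | weak Γ φ a₀ => rw [hrule] at hexp; exact hexp.elim
    | boxR Γ φ a₀ => rw [hrule] at hexp; exact hexp.elim
    | unfold Γ bb x φ a₀ => rw [hrule] at hexp; exact hexp.elim
    | clo Γ x φ a₀ x'' => rw [hrule] at hexp; exact hexp.elim
    | asm Γ x φ a₀ x'' => rw [hrule] at hexp; exact hexp.elim
    | cut Γ A => rw [hrule] at hexp; exact hexp.elim
  have hΦu' : stripSeq (ρ.label u') = PhiSeq := key u' h2 (List.prefix_refl u')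
  exact hch.2.2.2.2 u' huu' hu'v hu'u hu'ne ⟨hu'tree, hΦu', hu'noexp⟩

end CloDeriv
namespace CloDeriv

/-- The three-phase invariant between consecutive unfolding nodes. -/
def INVP (ρ : CloDerivPhi) (u z : List ℕ) : Prop :=
  ((∀ φa ∈ ρ.label z, inP0 φa.1)
      ∧ ((∃ b, (nuX, b) ∈ ρ.label z) → ρ.TraceRT u nuX z nuX)
      ∧ ((∃ b, (nuY, b) ∈ ρ.label z) → ρ.TraceRT u nuY z nuY))
  ∨ (∀ φa ∈ ρ.label z, inP1 φa.1)
  ∨ (∀ φa ∈ ρ.label z, inP2 φa.1)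

lemma inv_holds (ρ : CloDerivPhi) {u u' v : List ℕ}
    (hch : ρ.TChild u v) (hu'v : u' <+: v)
    (hnophi : ∀ y, u <+: y → y <+: u' → y ≠ u → stripSeq (ρ.label y) ≠ PhiSeq) :
    ∀ z, u <+: z → z <+: u' → INVP ρ u z := by
  have hvtree : v ∈ ρ.tree := hch.2.1.1
  have hΦu : stripSeq (ρ.label u) = PhiSeq := hch.1.2.1
  refine CloDeriv.path_ind (INVP ρ u) ?base ?step
  case base =>
    refine Or.inl ⟨?_, fun _ => TraceRT.refl u nuX, fun _ => TraceRT.refl u nuY⟩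
    rintro ⟨φ, b⟩ hm
    rcases stripPhi_cases hΦu hm with h | h
    · exact Or.inl h
    · exact Or.inr (Or.inr (Or.inl h))
  case step =>
    intro z n huz hznu' ih
    have hzntree : z ++ [n] ∈ ρ.tree := ρ.mem_of_prefix (hznu'.trans hu'v) hvtree
    have hztree : z ∈ ρ.tree := ρ.prefix_closed z n hzntree
    cases hrule : ρ.rule z with
    | ax p =>
      obtain ⟨hnlt, -⟩ := ρ.label_child_eq hztree hzntree hrule
      simp [CloRule.prems] at hnlt
    | asm Γ x φ a₀ x'' =>
      obtain ⟨hnlt, -⟩ := ρ.label_child_eq hztree hzntree hrule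
      simp [CloRule.prems] at hnlt
    | cut Γ A =>
      have := ρ.cut_ok z hztree (by rw [hrule]; trivial)
      simp at this
    | orR Γ φ ψ a₀ =>
      obtain ⟨hnlt, hlab⟩ := ρ.label_child_eq hztree hzntree hrule
      have hconcl := ρ.label_concl_eq hztree hrule
      have hn0 : n = 0 := by simpa [CloRule.prems] using hnlt
      subst hn0
      simp only [CloRule.prems, List.get] at hlab
      have hprin : (Formula.or φ ψ, a₀) ∈ ρ.label z := by
        rw [hconcl]; exact Finset.mem_insert_self _ _
      rcases ih with ⟨hP0, -, -⟩ | hP1 | hP2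
      · exact absurd (hP0 _ hprin) inP0_or
      · obtain ⟨hφ, hψ⟩ := inP1_or (hP1 _ hprin)
        subst hφ; subst hψ
        refine Or.inr (Or.inl ?_)
        intro φa hm
        rw [hlab] at hm
        rcases Finset.mem_insert.mp hm with h | h
        · rw [h]; simp [inP1, fA, fB, pP, pN, chi]
        · rcases Finset.mem_insert.mp h with h | h
          · rw [h]; simp [inP1, fA, fB, pP, pN, chi]
          · exact hP1 φa (by rw [hconcl]; exact Finset.mem_insert_of_mem h)
      · exact absurd (hP2 _ hprin) inP2_or
    | andR Γ φ ψ a₀ =>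
      obtain ⟨hnlt, hlab⟩ := ρ.label_child_eq hztree hzntree hrule
      have hconcl := ρ.label_concl_eq hztree hrule
      have hn2 : n < 2 := by simpa [CloRule.prems] using hnlt
      have hprin : (Formula.and φ ψ, a₀) ∈ ρ.label z := by
        rw [hconcl]; exact Finset.mem_insert_self _ _
      rcases ih with ⟨hP0, -, -⟩ | hP1 | hP2
      · exact absurd (hP0 _ hprin) inP0_and
      · have hφψ : inP1 φ ∧ inP1 ψ := by
          rcases inP1_and (hP1 _ hprin) with ⟨h1, h2⟩ | ⟨h1, h2⟩ <;> subst h1 <;> subst h2 <;>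
            exact ⟨by simp [inP1, fA, fB, pP, pN, chi], by simp [inP1, fA, fB, pP, pN, chi]⟩
        refine Or.inr (Or.inl ?_)
        intro φa hm
        interval_cases n <;>
        · simp only [CloRule.prems, List.get] at hlab
          rw [hlab] at hm
          rcases Finset.mem_insert.mp hm with h | h
          · rw [h]
            first
            | exact hφψ.1
            | exact hφψ.2
          · exact hP1 φa (by rw [hconcl]; exact Finset.mem_insert_of_mem h)
      · exact absurd (hP2 _ hprin) inP2_and
    | weak Γ φ a₀ =>
      obtain ⟨hnlt, hlab⟩ := ρ.label_child_eq hztree hzntree hrule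
      have hconcl := ρ.label_concl_eq hztree hrule
      have hn0 : n = 0 := by simpa [CloRule.prems] using hnlt
      subst hn0
      simp only [CloRule.prems, List.get] at hlab
      rcases ih with ⟨hP0, hTX, hTY⟩ | hP1 | hP2
      · refine Or.inl ⟨?_, ?_, ?_⟩
        · intro φa hm
          rw [hlab] at hm
          exact hP0 φa (by rw [hconcl]; exact Finset.mem_insert_of_mem hm)
        · rintro ⟨b, hb⟩
          rw [hlab] at hb
          refine TraceRT.step
            (hTX ⟨b, by rw [hconcl]; exact Finset.mem_insert_of_mem hb⟩) hzntree ?_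
          rw [hrule]
          exact ⟨⟨(nuX, b), hb, rfl⟩, rfl⟩
        · rintro ⟨b, hb⟩
          rw [hlab] at hb
          refine TraceRT.step
            (hTY ⟨b, by rw [hconcl]; exact Finset.mem_insert_of_mem hb⟩) hzntree ?_
          rw [hrule]
          exact ⟨⟨(nuY, b), hb, rfl⟩, rfl⟩
      · refine Or.inr (Or.inl ?_)
        intro φa hm
        rw [hlab] at hm
        exact hP1 φa (by rw [hconcl]; exact Finset.mem_insert_of_mem hm)
      · refine Or.inr (Or.inr ?_)
        intro φa hm
        rw [hlab] at hm
        exact hP2 φa (by rw [hconcl]; exact Finset.mem_insert_of_mem hm)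
    | boxR Γ φ a₀ =>
      obtain ⟨hnlt, hlab⟩ := ρ.label_child_eq hztree hzntree hrule
      have hconcl := ρ.label_concl_eq hztree hrule
      have hn0 : n = 0 := by simpa [CloRule.prems] using hnlt
      subst hn0
      simp only [CloRule.prems, List.get] at hlab
      have hprin : (Formula.box φ, a₀) ∈ ρ.label z := by
        rw [hconcl]; exact Finset.mem_insert_self _ _
      have hctx : ∀ q ∈ Γ, (Formula.dia q.1, q.2) ∈ ρ.label z := by
        intro q hq
        rw [hconcl]
        exact Finset.mem_insert_of_mem (Finset.mem_image_of_mem _ hq)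
      rcases ih with ⟨hP0, -, -⟩ | hP1 | hP2
      · -- phase 0 goes to phase 1
        have hφ : φ = fB := inP0_box (hP0 _ hprin)
        subst hφ
        refine Or.inr (Or.inl ?_)
        intro φa hm
        rw [hlab] at hm
        rcases Finset.mem_insert.mp hm with h | h
        · rw [h]; simp [inP1, fA, fB, pP, pN, chi]
        · have := inP0_dia (hP0 _ (hctx φa h))
          rw [this]
          simp [inP1, fA, fB, pP, pN, chi]
      · -- phase 1: premise is {nuX} or the forbidden Φ
        have hφ : φ = nuX := inP1_box (hP1 _ hprin)
        subst hφ
        have hΓnuY : ∀ q ∈ Γ, q.1 = nuY := fun q hq => inP1_dia (hP1 _ (hctx q hq))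
        rcases Finset.eq_empty_or_nonempty Γ with rfl | ⟨⟨e1, e2⟩, he⟩
        · refine Or.inr (Or.inr ?_)
          intro φa hm
          rw [hlab] at hm
          rcases Finset.mem_insert.mp hm with h | h
          · rw [h]; exact Or.inl rfl
          · exact absurd h (Finset.notMem_empty _)
        · exfalso
          have he1 : e1 = nuY := hΓnuY (e1, e2) he
          subst he1
          have hΦ : stripSeq (ρ.label (z ++ [0])) = PhiSeq := by
            rw [hlab]
            apply Finset.Subset.antisymm
            · intro ψ hψ
              obtain ⟨b, hb⟩ := mem_stripSeq.mp hψ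
              rcases Finset.mem_insert.mp hb with h | h
              · obtain ⟨h1, -⟩ := Prod.mk.injEq .. ▸ h
                rw [h1]; simp [PhiSeq]
              · have h5 : ψ = nuY := hΓnuY (ψ, b) h
                rw [h5]; simp [PhiSeq]
            · intro ψ hψ
              simp only [PhiSeq, Finset.mem_insert, Finset.mem_singleton] at hψ
              rcases hψ with rfl | rfl
              · exact mem_stripSeq.mpr ⟨a₀, Finset.mem_insert_self _ _⟩
              · exact mem_stripSeq.mpr ⟨e2, Finset.mem_insert_of_mem he⟩
          refine hnophi (z ++ [0]) (huz.trans (List.prefix_append _ _)) hznu' ?_ hΦ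
          intro h
          have h4 := huz.length_le
          have h6 : u.length = z.length + 1 := by rw [← h]; simp
          omega
      · exact absurd (hP2 _ hprin) inP2_box
    | unfold Γ bb x φ a₀ =>
      obtain ⟨hnlt, hlab⟩ := ρ.label_child_eq hztree hzntree hrule
      have hconcl := ρ.label_concl_eq hztree hrule
      have hn0 : n = 0 := by simpa [CloRule.prems] using hnlt
      subst hn0
      simp only [CloRule.prems, List.get] at hlab
      have hprin : (Formula.eta bb x φ, a₀) ∈ ρ.label z := by
        rw [hconcl]; exact Finset.mem_insert_self _ _
      rcases ih with ⟨hP0, hTX, hTY⟩ | hP1 | hP2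
      · obtain ⟨hb, hcase⟩ := inP0_eta (hP0 _ hprin)
        subst hb
        have hunf : inP0 (Formula.unfoldEta true x φ) ∧ Formula.unfoldEta true x φ ≠ nuX ∧
            Formula.unfoldEta true x φ ≠ nuY := by
          rcases hcase with ⟨h1, h2⟩ | ⟨h1, h2⟩ <;> subst h1 <;> subst h2 <;>
            exact ⟨by simp only [inP0]; decide, by decide, by decide⟩
        refine Or.inl ⟨?_, ?_, ?_⟩
        · intro φa hm
          rw [hlab] at hm
          rcases Finset.mem_insert.mp hm with h | h
          · rw [h]; exact hunf.1
          · exact hP0 φa (by rw [hconcl]; exact Finset.mem_insert_of_mem h)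
        · rintro ⟨b, hb⟩
          rw [hlab] at hb
          rcases Finset.mem_insert.mp hb with h | h
          · obtain ⟨h1, -⟩ := Prod.mk.injEq .. ▸ h
            exact absurd h1.symm hunf.2.1
          · refine TraceRT.step
              (hTX ⟨b, by rw [hconcl]; exact Finset.mem_insert_of_mem h⟩) hzntree ?_
            rw [hrule]
            exact Or.inr ⟨⟨(nuX, b), h, rfl⟩, rfl⟩
        · rintro ⟨b, hb⟩
          rw [hlab] at hb
          rcases Finset.mem_insert.mp hb with h | h
          · obtain ⟨h1, -⟩ := Prod.mk.injEq .. ▸ h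
            exact absurd h1.symm hunf.2.2
          · refine TraceRT.step
              (hTY ⟨b, by rw [hconcl]; exact Finset.mem_insert_of_mem h⟩) hzntree ?_
            rw [hrule]
            exact Or.inr ⟨⟨(nuY, b), h, rfl⟩, rfl⟩
      · exact absurd (hP1 _ hprin) inP1_eta
      · obtain ⟨hb, hx, hφ⟩ := inP2_eta (hP2 _ hprin)
        subst hb; subst hx; subst hφ
        refine Or.inr (Or.inr ?_)
        intro φa hm
        rw [hlab] at hm
        rcases Finset.mem_insert.mp hm with h | h
        · rw [h]; exact Or.inr rfl
        · exact hP2 φa (by rw [hconcl]; exact Finset.mem_insert_of_mem h)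
    | clo Γ x φ a₀ x'' =>
      obtain ⟨hnlt, hlab⟩ := ρ.label_child_eq hztree hzntree hrule
      have hconcl := ρ.label_concl_eq hztree hrule
      have hn0 : n = 0 := by simpa [CloRule.prems] using hnlt
      subst hn0
      simp only [CloRule.prems, List.get] at hlab
      have hprin : (Formula.nu x φ, a₀) ∈ ρ.label z := by
        rw [hconcl]; exact Finset.mem_insert_self _ _
      rcases ih with ⟨hP0, hTX, hTY⟩ | hP1 | hP2
      · have hcase := inP0_nu (hP0 _ hprin)
        have hunf : inP0 (Formula.unfoldNu x φ) ∧ Formula.unfoldNu x φ ≠ nuX ∧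
            Formula.unfoldNu x φ ≠ nuY := by
          rcases hcase with ⟨h1, h2⟩ | ⟨h1, h2⟩ <;> subst h1 <;> subst h2 <;>
            exact ⟨by simp only [inP0]; decide, by decide, by decide⟩
        refine Or.inl ⟨?_, ?_, ?_⟩
        · intro φa hm
          rw [hlab] at hm
          rcases Finset.mem_insert.mp hm with h | h
          · rw [h]; exact hunf.1
          · exact hP0 φa (by rw [hconcl]; exact Finset.mem_insert_of_mem h)
        · rintro ⟨b, hb⟩
          rw [hlab] at hb
          rcases Finset.mem_insert.mp hb with h | h
          · obtain ⟨h1, -⟩ := Prod.mk.injEq .. ▸ h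
            exact absurd h1.symm hunf.2.1
          · refine TraceRT.step
              (hTX ⟨b, by rw [hconcl]; exact Finset.mem_insert_of_mem h⟩) hzntree ?_
            rw [hrule]
            exact Or.inr ⟨⟨(nuX, b), h, rfl⟩, rfl⟩
        · rintro ⟨b, hb⟩
          rw [hlab] at hb
          rcases Finset.mem_insert.mp hb with h | h
          · obtain ⟨h1, -⟩ := Prod.mk.injEq .. ▸ h
            exact absurd h1.symm hunf.2.2
          · refine TraceRT.step
              (hTY ⟨b, by rw [hconcl]; exact Finset.mem_insert_of_mem h⟩) hzntree ?_
            rw [hrule]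
            exact Or.inr ⟨⟨(nuY, b), h, rfl⟩, rfl⟩
      · exact absurd (hP1 _ hprin) inP1_nu
      · obtain ⟨hx, hφ⟩ := inP2_nu (hP2 _ hprin)
        subst hx; subst hφ
        refine Or.inr (Or.inr ?_)
        intro φa hm
        rw [hlab] at hm
        rcases Finset.mem_insert.mp hm with h | h
        · rw [h]; exact Or.inr rfl
        · exact hP2 φa (by rw [hconcl]; exact Finset.mem_insert_of_mem h)
    | exp l =>
      obtain ⟨hnlt, hlab⟩ := ρ.label_child_eq hztree hzntree hrule
      have hconcl := ρ.label_concl_eq hztree hrule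
      simp only [CloRule.concl] at hconcl
      have hn0 : n = 0 := by simpa [CloRule.prems] using hnlt
      subst hn0
      simp only [CloRule.prems, List.get] at hlab
      have hmem : ∀ φa : AFormula, φa ∈ ρ.label (z ++ [0]) →
          ∃ t' ∈ l, t'.1 = φa.1 ∧ (t'.1, t'.2.2) ∈ ρ.label z := by
        intro φa hm
        rw [hlab] at hm
        obtain ⟨t', ht', heq⟩ := List.mem_map.mp (List.mem_toFinset.mp hm)
        refine ⟨t', ht', by rw [← heq], ?_⟩
        rw [hconcl]
        exact List.mem_toFinset.mpr (List.mem_map.mpr ⟨t', ht', rfl⟩)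
      rcases ih with ⟨hP0, hTX, hTY⟩ | hP1 | hP2
      · refine Or.inl ⟨?_, ?_, ?_⟩
        · intro φa hm
          obtain ⟨t', -, h1, h2⟩ := hmem φa hm
          have := hP0 _ h2
          rwa [h1] at this
        · rintro ⟨b, hb⟩
          obtain ⟨t', ht', h1, h2⟩ := hmem (nuX, b) hb
          refine TraceRT.step (hTX ⟨t'.2.2, by rwa [h1] at h2⟩) hzntree ?_
          rw [hrule]
          exact ⟨⟨t', ht', h1.symm⟩, rfl⟩
        · rintro ⟨b, hb⟩
          obtain ⟨t', ht', h1, h2⟩ := hmem (nuY, b) hb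
          refine TraceRT.step (hTY ⟨t'.2.2, by rwa [h1] at h2⟩) hzntree ?_
          rw [hrule]
          exact ⟨⟨t', ht', h1.symm⟩, rfl⟩
      · refine Or.inr (Or.inl ?_)
        intro φa hm
        obtain ⟨t', -, h1, h2⟩ := hmem φa hm
        have := hP1 _ h2
        rwa [h1] at this
      · refine Or.inr (Or.inr ?_)
        intro φa hm
        obtain ⟨t', -, h1, h2⟩ := hmem φa hm
        have := hP2 _ h2
        rwa [h1] at this

end CloDeriv
namespace CloDeriv

/-- Main lemma: if an assumption in the subtree at `v` is discharged by a `clo`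
rule at `u'` between `u` and `v` (with `u`, `v` consecutive unfolding nodes),
then there is a trace from the principal formula of the `clo` at `u` to `v`. -/
lemma main_no_asm (ρ : CloDerivPhi) {u v u' w : List ℕ}
    (hch : ρ.TChild u v)
    (hu' : u' ∈ ρ.tree) (h1 : u <+: u') (h2 : u' <+: v) (h3 : u' ≠ v)
    {Γ' : ASequent} {x : ℕ} {φ : Formula} {a : Ann} {t : Name}
    (hclo : ρ.rule u' = .clo Γ' x φ a t)
    (hw : w ∈ ρ.tree) (hvw : v <+: w)
    {Γ₂ : ASequent} {x₂ : ℕ} {φ₂ : Formula} {a₂ : Ann}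
    (hasm : ρ.rule w = .asm Γ₂ x₂ φ₂ a₂ t) :
    ρ.TraceRT u (.nu x φ) v nuX ∨ ρ.TraceRT u (.nu x φ) v nuY := by
  -- identify the companion of the discharged assumption with `u'`
  obtain ⟨comp, hcpre, hcne, hctree, hcrule⟩ := ρ.discharged w hw Γ₂ x₂ φ₂ a₂ t hasm
  have hcomp : comp = u' :=
    ρ.token_unique comp hctree u' hu' t (by rw [hcrule]; rfl) (by rw [hclo]; rfl)
  rw [hcomp, hclo] at hcrule
  injection hcrule with e1 e2 e3 e4 e5
  subst e1; subst e2; subst e3; subst e4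
  have hvtree : v ∈ ρ.tree := hch.2.1.1
  have hΦv : stripSeq (ρ.label v) = PhiSeq := hch.2.1.2.1
  have hlen : u'.length < v.length := CloDeriv.proper_prefix_length h2 h3
  obtain ⟨χv, bv, hχv, hyv⟩ := ρ.asm_ann hu' hclo hw hasm hvw hlen
  have hτ : ρ.TraceRT u' (.nu x φ) v χv := ρ.clo_trace hu' hclo v hvtree h2 χv bv hχv hyv
  have hχ : χv = nuX ∨ χv = nuY := stripPhi_cases hΦv hχv
  by_cases hue : u = u'
  · subst hue
    rcases hχ with rfl | rfl
    · exact Or.inl hτ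
    · exact Or.inr hτ
  · have hnoexp : ¬ (ρ.rule u').IsExp := by rw [hclo]; exact fun h => h
    have hnophi := ρ.no_phi_between hch h1 h2 h3 hnoexp
    have hinv := ρ.inv_holds hch h2 hnophi u' h1 (List.prefix_refl u')
    have hprin : (Formula.nu x φ, a) ∈ ρ.label u' := by
      rw [ρ.label_concl_eq hu' hclo]; exact Finset.mem_insert_self _ _
    rcases hinv with ⟨hP0, hTX, hTY⟩ | hP1 | hP2
    · rcases inP0_nu (hP0 _ hprin) with ⟨hx0, hφ0⟩ | ⟨hx1, hφ1⟩
      · subst hx0; subst hφ0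
        have hT : ρ.TraceRT u nuX u' nuX := hTX ⟨a, hprin⟩
        have hcomp := ρ.trace_comp hT hτ
        rcases hχ with rfl | rfl
        · exact Or.inl hcomp
        · exact Or.inr hcomp
      · subst hx1; subst hφ1
        have hT : ρ.TraceRT u nuY u' nuY := hTY ⟨a, hprin⟩
        have hcomp := ρ.trace_comp hT hτ
        rcases hχ with rfl | rfl
        · exact Or.inl hcomp
        · exact Or.inr hcomp
    · exact absurd (hP1 _ hprin) inP1_nu
    · exfalso
      have hall := ρ.p2_prop hvtree h2 hP2
      obtain ⟨b, hb⟩ := nuY_mem_of_strip hΦv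
      exact nuY_notP2 (hall (nuY, b) hb)

end CloDeriv

/-- Let ρ be a Clo derivation obtained from an NW proof π of Φ,
let u and v be unfolding nodes of ρ with v a child of u in T_ρ, and let u' be a
node between u and v.  If v is an x-node and u' is labelled by a discharge rule
clo_{y'} with principal formula νy.ψ, then none of the assumptions discharged
at u' lie in the subtree of ρ rooted at v; symmetrically if v is a y-node and
the principal formula at u' is νx.φ. -/
theorem clo_no_discharge_in_subtree (π : NWDeriv PhiSeq) (hπ : π.IsProof)
    (ρ : CloDeriv false (annSeq PhiSeq)) (hρ : Obtains π ρ)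
    (u v u' : List ℕ) (hu' : u' ∈ ρ.tree)
    (h1 : u <+: u') (h2 : u' <+: v) (h3 : u' ≠ v) :
    (ρ.IsXNode u v →
      ∀ (Γ' : ASequent) (a : Ann) (y' : Name), ρ.rule u' = .clo Γ' 1 psiBody a y' →
        ∀ w ∈ ρ.tree, v <+: w →
          ∀ (Γ₂ : ASequent) (x₂ : ℕ) (φ₂ : Formula) (a₂ : Ann),
            ρ.rule w ≠ .asm Γ₂ x₂ φ₂ a₂ y') ∧
    (ρ.IsYNode u v →
      ∀ (Γ' : ASequent) (a : Ann) (x' : Name), ρ.rule u' = .clo Γ' 0 phiBody a x' →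
        ∀ w ∈ ρ.tree, v <+: w →
          ∀ (Γ₂ : ASequent) (x₂ : ℕ) (φ₂ : Formula) (a₂ : Ann),
            ρ.rule w ≠ .asm Γ₂ x₂ φ₂ a₂ x') := by
  constructor
  · intro hx Γ' a y' hrule w hw hvw Γ₂ x₂ φ₂ a₂ heq
    have htr := CloDeriv.main_no_asm ρ hx.1 hu' h1 h2 h3 hrule hw hvw heq
    exact hx.2 htr
  · intro hy Γ' a x' hrule w hw hvw Γ₂ x₂ φ₂ a₂ heq
    have htr := CloDeriv.main_no_asm ρ hy.1 hu' h1 h2 h3 hrule hw hvw heq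
    exact hy.2 htr
end

section
/- Neither of the formulas νx.φ and νy.ψ is valid on its own: there is a Kripke model and a state at which νx.φ fails, and a Kripke model and a state at which νy.ψ fails. -/
set_option linter.unusedVariables false

/-- Neither νx.φ nor νy.ψ is valid on its own: there is a Kripke
model and a state at which νx.φ fails, and a Kripke model and a state at which
νy.ψ fails. -/
theorem nuX_nuY_not_valid :
    (∃ (W : Type) (M : Kripke W) (w : W), ∀ env : ℕ → Set W, w ∉ sem M nuX env) ∧
    (∃ (W : Type) (M : Kripke W) (w : W), ∀ env : ℕ → Set W, w ∉ sem M nuY env) := by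
  constructor
  · refine ⟨Unit, ⟨fun _ _ => False, fun _ _ => False⟩, (), fun env h => ?_⟩
    rw [show nuX = .nu 0 phiBody from rfl] at h
    obtain ⟨S, hS, hwS⟩ := h
    have := hS hwS
    rw [show phiBody = .dia (.and pN (.or (.box (.var 0)) (.dia psiIn))) from rfl] at this
    obtain ⟨v, hv, -⟩ := this
    exact hv
  · refine ⟨Unit, ⟨fun _ _ => True, fun _ _ => False⟩, (), fun env h => ?_⟩
    rw [show nuY = .nu 1 (.box (.and pP (.or (.box nuX) (.dia (.var 1))))) from rfl] at h
    obtain ⟨S, hS, hwS⟩ := h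
    have := hS hwS () trivial
    exact this.1
end

section
/- The sequent Φ = {νx.φ, νy.ψ} is not adisjunctive: the disjunction χ = □νx.φ ∨ ◇νy.ψ lies in Clos(νx.φ), and νx.φ lies both in Clos(□νx.φ) and in Clos(◇νy.ψ). -/
set_option linter.unusedVariables false

/-- The sequent Φ is not adisjunctive: χ = □νx.φ ∨ ◇νy.ψ lies in
Clos(νx.φ), and νx.φ lies both in Clos(□νx.φ) and in Clos(◇νy.ψ). -/
theorem Phi_not_adisjunctive :
    ¬ Adisjunctive PhiSeq ∧ chi ∈ Clos {nuX} ∧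
      nuX ∈ Clos {Formula.box nuX} ∧ nuX ∈ Clos {Formula.dia nuY} := by

  have hunf : Formula.unfoldNu 0 phiBody = .dia (.and pN chi) := by
    simp [Formula.unfoldNu, phiBody, Formula.subst, chi, nuY, psiIn, nuX, pN]
  have hnuY : nuY = .nu 1 (.box (.and pP (.or (.box nuX) (.dia (.var 1))))) := by
    simp [nuY, psiIn, Formula.subst, pP]
  have hunfY : Formula.unfoldNu 1 (.box (.and pP (.or (.box nuX) (.dia (.var 1)))))
      = .box (.and pP (.or (.box nuX) (.dia nuY))) := by
    simp [Formula.unfoldNu, Formula.subst, hnuY, pP, pN, nuX, phiBody, psiIn]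
  have h1 : chi ∈ Clos {nuX} := by
    refine ⟨nuX, Finset.mem_singleton_self _, ?_⟩
    have s1 : TStep nuX (.dia (.and pN chi)) := by
      have := TStep.nu 0 phiBody
      rwa [hunf] at this
    exact Relation.ReflTransGen.head s1 (Relation.ReflTransGen.head (TStep.dia _)
      (Relation.ReflTransGen.single (TStep.andR _ _)))
  have h2 : nuX ∈ Clos {Formula.box nuX} :=
    ⟨_, Finset.mem_singleton_self _, Relation.ReflTransGen.single (TStep.box _)⟩
  have h3 : nuX ∈ Clos {Formula.dia nuY} := by
    refine ⟨_, Finset.mem_singleton_self _, ?_⟩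
    have s2 : TStep nuY (.box (.and pP (.or (.box nuX) (.dia nuY)))) := by
      rw [hnuY]; have := TStep.nu 1 (.box (.and pP (.or (.box nuX) (.dia (.var 1)))))
      rwa [hunfY] at this
    exact Relation.ReflTransGen.head (TStep.dia _) (Relation.ReflTransGen.head s2
      (Relation.ReflTransGen.head (TStep.box _) (Relation.ReflTransGen.head (TStep.andR _ _)
      (Relation.ReflTransGen.head (TStep.orL _ _)
      (Relation.ReflTransGen.single (TStep.box _))))))
  refine ⟨?_, h1, h2, h3⟩
  intro h
  have hmem : Formula.nu 0 phiBody ∈ Clos PhiSeq := by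
    refine ⟨nuX, ?_, Relation.ReflTransGen.refl⟩
    simp [PhiSeq]
  have := h 0 phiBody hmem (Formula.box nuX) (Formula.dia nuY) h1
  rcases this with h' | h' <;> [exact h' h2; exact h' h3]
end
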